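/- arXiv:2308.05461 — 2 statements merged into one kernel-verified Lean document; each statement's English description precedes it below -/
import Mathlib

section
/- Let P be a polyomino and let F be a facet of the rook complex ℛ_P (i.e., a maximal set of pairwise non-attacking cells of P) with |F| < r(P), where r(P) is the rook number of P. Then there exists a facet F' of ℛ_P with |F'| = |F| + 1. -/
open MvPolynomial


/-- A cell of a polyomino, identified with its lower-left corner in `ℕ²`. -/
abbrev Cell := ℕ × ℕ

/-- Two cells share an edge. -/
def cellAdj (c d : Cell) : Prop :=
  (c.1 = d.1 ∧ (c.2 + 1 = d.2 ∨ d.2 + 1 = c.2)) ∨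
  (c.2 = d.2 ∧ (c.1 + 1 = d.1 ∨ d.1 + 1 = c.1))

/-- The four vertices of the unit square with lower-left corner `c`. -/
def cellVerts (c : Cell) : Finset (ℕ × ℕ) :=
  {c, (c.1 + 1, c.2), (c.1, c.2 + 1), (c.1 + 1, c.2 + 1)}

/-- The vertex set `V(P)` of a collection of cells. -/
def polyVerts (P : Finset Cell) : Finset (ℕ × ℕ) := P.biUnion cellVerts

/-- Two cells are joined by a sequence of cells of `Q` in which consecutive cells
share an edge. -/
def connectedIn (Q : Set Cell) (c d : Cell) : Prop :=
  Relation.ReflTransGen (fun x y => x ∈ Q ∧ y ∈ Q ∧ cellAdj x y) c d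

/-- A polyomino: a finite nonempty edge-connected set of cells. -/
def IsPolyomino (P : Finset Cell) : Prop :=
  P.Nonempty ∧ ∀ c ∈ P, ∀ d ∈ P, connectedIn (↑P) c d

/-- A polyomino is thin if it contains no 2×2 square tetromino. -/
def IsThin (P : Finset Cell) : Prop :=
  ¬ ∃ c : Cell, c ∈ P ∧ (c.1 + 1, c.2) ∈ P ∧ (c.1, c.2 + 1) ∈ P ∧ (c.1 + 1, c.2 + 1) ∈ P

/-- A polyomino is simple if any two cells outside of it are connected by a path of
cells outside of it. -/
def IsSimplePoly (P : Finset Cell) : Prop :=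
  IsPolyomino P ∧ ∀ c d : Cell, c ∉ P → d ∉ P → connectedIn {x : Cell | x ∉ P} c d

/-- Two (distinct) cells of `P` attack each other: they lie in a common row or column
of cells and all cells between them belong to `P`. -/
def Attacks (P : Finset Cell) (c d : Cell) : Prop :=
  c ≠ d ∧
  ((c.2 = d.2 ∧ ∀ t : ℕ, min c.1 d.1 ≤ t → t ≤ max c.1 d.1 → (t, c.2) ∈ P) ∨
   (c.1 = d.1 ∧ ∀ t : ℕ, min c.2 d.2 ≤ t → t ≤ max c.2 d.2 → (c.1, t) ∈ P))

/-- `F` is a non-attacking set of cells (a configuration of non-attacking rooks) of `P`. -/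
def NonAtt (P F : Finset Cell) : Prop :=
  F ⊆ P ∧ ∀ c ∈ F, ∀ d ∈ F, ¬ Attacks P c d

/-- A facet of the rook complex: a maximal non-attacking set of cells. -/
def IsFacet (P F : Finset Cell) : Prop :=
  NonAtt P F ∧ ∀ G : Finset Cell, NonAtt P G → F ⊆ G → G = F

/-- The rook number: the maximum cardinality of a non-attacking set of cells of `P`. -/
noncomputable def rookNumber (P : Finset Cell) : ℕ :=
  sSup {n : ℕ | ∃ F : Finset Cell, NonAtt P F ∧ F.card = n}

/-- A maximal cell interval: a maximal set of pairwise attacking cells of `P`. -/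
def IsMaxInterval (P I : Finset Cell) : Prop :=
  I.Nonempty ∧ I ⊆ P ∧ (∀ c ∈ I, ∀ d ∈ I, c ≠ d → Attacks P c d) ∧
  ∀ J : Finset Cell, J ⊆ P → (∀ c ∈ J, ∀ d ∈ J, c ≠ d → Attacks P c d) → I ⊆ J → J = I

/-- A cell of `P` is single if all cells of `P` attacking it lie, together with it,
in one common maximal cell interval. -/
def IsSingle (P : Finset Cell) (c : Cell) : Prop :=
  c ∈ P ∧ ∃ I : Finset Cell, IsMaxInterval P I ∧ c ∈ I ∧ ∀ d ∈ P, Attacks P c d → d ∈ I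

/-- `P` is a path polyomino with cells `C 1, …, C ℓ`. -/
def IsPathPoly (ℓ : ℕ) (C : ℕ → Cell) (P : Finset Cell) : Prop :=
  2 ≤ ℓ ∧
  P = (Finset.Icc 1 ℓ).image C ∧
  (∀ i ∈ Finset.Icc 1 ℓ, ∀ j ∈ Finset.Icc 1 ℓ, C i = C j → i = j) ∧
  (∀ i : ℕ, 1 ≤ i → i < ℓ → cellAdj (C i) (C (i + 1))) ∧
  (∀ i j : ℕ, 3 ≤ i → i + 2 ≤ ℓ → 1 ≤ j → j ≤ ℓ → (j + 2 < i ∨ i + 2 < j) →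
    Disjoint (cellVerts (C i)) (cellVerts (C j))) ∧
  IsThin P

/-- `I 1, …, I s` is the ordered sequence of the maximal cell intervals of a path
polyomino, consecutive ones intersecting. -/
def IsIntervalSeq (P : Finset Cell) (s : ℕ) (I : ℕ → Finset Cell) : Prop :=
  1 ≤ s ∧
  (∀ k ∈ Finset.Icc 1 s, IsMaxInterval P (I k)) ∧
  (∀ J : Finset Cell, IsMaxInterval P J → ∃ k ∈ Finset.Icc 1 s, J = I k) ∧
  (∀ k ∈ Finset.Icc 1 s, ∀ m ∈ Finset.Icc 1 s, I k = I m → k = m) ∧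
  (∀ k : ℕ, 1 ≤ k → k < s → ((I k) ∩ (I (k + 1))).Nonempty)

/-- The intervals `I (k+1), …, I (k+l)` form a stair of length `l` of a path polyomino
whose ordered maximal cell intervals are `I 1, …, I s`: all intermediate intervals have
length 2, and each extreme interval either has length `> 2` or is an end interval of
length 2. -/
def IsStairAt (s : ℕ) (I : ℕ → Finset Cell) (k l : ℕ) : Prop :=
  2 ≤ l ∧ k + l ≤ s ∧
  (∀ i : ℕ, k + 1 < i → i < k + l → (I i).card = 2) ∧
  (2 < (I (k + 1)).card ∨ (k = 0 ∧ (I (k + 1)).card = 2)) ∧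
  (2 < (I (k + l)).card ∨ (k + l = s ∧ (I (k + l)).card = 2))

/-- A bad stair is a stair of length 4, 6, or at least 8. -/
def HasBadStair (s : ℕ) (I : ℕ → Finset Cell) : Prop :=
  ∃ k l : ℕ, IsStairAt s I k l ∧ (l = 4 ∨ l = 6 ∨ 8 ≤ l)

/-- Horizontal attack relation (reflexive version). -/
def Rh (P : Finset Cell) (c d : Cell) : Prop :=
  c.2 = d.2 ∧ ∀ t : ℕ, min c.1 d.1 ≤ t → t ≤ max c.1 d.1 → (t, c.2) ∈ P

/-- Vertical attack relation (reflexive version). -/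
def Rv (P : Finset Cell) (c d : Cell) : Prop :=
  c.1 = d.1 ∧ ∀ t : ℕ, min c.2 d.2 ≤ t → t ≤ max c.2 d.2 → (c.1, t) ∈ P

lemma attacks_iff {P : Finset Cell} {c d : Cell} :
    Attacks P c d ↔ c ≠ d ∧ (Rh P c d ∨ Rv P c d) := Iff.rfl

lemma Rh_refl {P : Finset Cell} {c : Cell} (h : c ∈ P) : Rh P c c := by
  refine ⟨rfl, fun t ht1 ht2 => ?_⟩
  have : t = c.1 := by omega
  subst this
  simpa using h

lemma Rv_refl {P : Finset Cell} {c : Cell} (h : c ∈ P) : Rv P c c := by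
  refine ⟨rfl, fun t ht1 ht2 => ?_⟩
  have : t = c.2 := by omega
  subst this
  simpa using h

lemma Rh_symm {P : Finset Cell} {c d : Cell} (h : Rh P c d) : Rh P d c := by
  obtain ⟨h1, h2⟩ := h
  refine ⟨h1.symm, fun t ht1 ht2 => ?_⟩
  rw [← h1]
  exact h2 t (by omega) (by omega)

lemma Rv_symm {P : Finset Cell} {c d : Cell} (h : Rv P c d) : Rv P d c := by
  obtain ⟨h1, h2⟩ := h
  refine ⟨h1.symm, fun t ht1 ht2 => ?_⟩
  rw [← h1]
  exact h2 t (by omega) (by omega)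

lemma Rh_trans {P : Finset Cell} {c d e : Cell} (h1 : Rh P c d) (h2 : Rh P d e) :
    Rh P c e := by
  refine ⟨h1.1.trans h2.1, fun t ht1 ht2 => ?_⟩
  by_cases hc : min c.1 d.1 ≤ t ∧ t ≤ max c.1 d.1
  · exact h1.2 t hc.1 hc.2
  · rw [h1.1]
    exact h2.2 t (by omega) (by omega)

lemma Rv_trans {P : Finset Cell} {c d e : Cell} (h1 : Rv P c d) (h2 : Rv P d e) :
    Rv P c e := by
  refine ⟨h1.1.trans h2.1, fun t ht1 ht2 => ?_⟩
  by_cases hc : min c.2 d.2 ≤ t ∧ t ≤ max c.2 d.2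
  · exact h1.2 t hc.1 hc.2
  · rw [h1.1]
    exact h2.2 t (by omega) (by omega)

lemma attacks_symm {P : Finset Cell} {c d : Cell} (h : Attacks P c d) :
    Attacks P d c := by
  rw [attacks_iff] at h ⊢
  rcases h with ⟨hne, h | h⟩
  · exact ⟨hne.symm, Or.inl (Rh_symm h)⟩
  · exact ⟨hne.symm, Or.inr (Rv_symm h)⟩

/-- Key covering lemma (horizontal direction): if `N` is a non-attacking set of
cardinality `|M|+1` with `|N \ M|` minimal, then every cell of `M` has a cell of `N`
in its maximal horizontal interval. -/
lemma cover_h {P M N : Finset Cell} (hM : NonAtt P M) (hN : NonAtt P N)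
    (hNcard : N.card = M.card + 1)
    (hmin : ∀ N' : Finset Cell, NonAtt P N' → N'.card = M.card + 1 →
      (N \ M).card ≤ (N' \ M).card)
    {c : Cell} (hc : c ∈ M) : ∃ d ∈ N, Rh P c d := by
  by_contra hno
  push_neg at hno
  have hcP : c ∈ P := hM.1 hc
  have hcN : c ∉ N := fun h => hno c h (Rh_refl hcP)
  obtain ⟨g, hgN, hgM, hsafe⟩ :
      ∃ g, g ∈ N ∧ g ∉ M ∧ ∀ b ∈ N.erase g, ¬ Attacks P c b := by
    by_cases hg : ∃ g ∈ N, Rv P c g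
    · obtain ⟨g, hgN, hgv⟩ := hg
      have hgc : g ≠ c := fun h => hcN (h ▸ hgN)
      have hgM : g ∉ M := fun hgM' =>
        hM.2 c hc g hgM' (attacks_iff.mpr ⟨fun h => hgc h.symm, Or.inr hgv⟩)
      refine ⟨g, hgN, hgM, fun b hb hatt => ?_⟩
      have hbN := Finset.mem_erase.mp hb
      rcases (attacks_iff.mp hatt).2 with hh | hv
      · exact hno b hbN.2 hh
      · exact hN.2 b hbN.2 g hgN
          (attacks_iff.mpr ⟨hbN.1, Or.inr (Rv_trans (Rv_symm hv) hgv)⟩)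
    · push_neg at hg
      have hne : (N \ M).Nonempty := by
        rw [Finset.sdiff_nonempty]
        intro hsub
        have := Finset.card_le_card hsub
        omega
      obtain ⟨g, hg'⟩ := hne
      rw [Finset.mem_sdiff] at hg'
      refine ⟨g, hg'.1, hg'.2, fun b hb hatt => ?_⟩
      have hbN := Finset.mem_erase.mp hb
      rcases (attacks_iff.mp hatt).2 with hh | hv
      · exact hno b hbN.2 hh
      · exact hg b hbN.2 hv
  have hcNe : c ∉ N.erase g := fun h => hcN (Finset.mem_erase.mp h).2
  have hN'att : NonAtt P (insert c (N.erase g)) := by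
    refine ⟨fun x hx => ?_, fun a ha b hb hatt => ?_⟩
    · rcases Finset.mem_insert.mp hx with h | h
      · exact h ▸ hcP
      · exact hN.1 (Finset.mem_erase.mp h).2
    · rcases Finset.mem_insert.mp ha with ha' | ha' <;>
        rcases Finset.mem_insert.mp hb with hb' | hb'
      · exact (attacks_iff.mp hatt).1 (ha'.trans hb'.symm)
      · exact hsafe b hb' (by rwa [ha'] at hatt)
      · exact hsafe a ha' (attacks_symm (by rwa [hb'] at hatt))
      · exact hN.2 a (Finset.mem_erase.mp ha').2 b (Finset.mem_erase.mp hb').2 hatt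
  have hN'card : (insert c (N.erase g)).card = M.card + 1 := by
    rw [Finset.card_insert_of_notMem hcNe, Finset.card_erase_of_mem hgN]
    have := Finset.card_pos.mpr ⟨g, hgN⟩
    omega
  have hgNM : g ∈ N \ M := Finset.mem_sdiff.mpr ⟨hgN, hgM⟩
  have hsub : insert c (N.erase g) \ M ⊆ (N \ M).erase g := by
    intro x hx
    rw [Finset.mem_sdiff] at hx
    rcases Finset.mem_insert.mp hx.1 with h | h
    · exact absurd (h ▸ hc) hx.2
    · rw [Finset.mem_erase] at h ⊢
      exact ⟨h.1, Finset.mem_sdiff.mpr ⟨h.2, hx.2⟩⟩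
  have h1 := hmin _ hN'att hN'card
  have h2 := Finset.card_le_card hsub
  rw [Finset.card_erase_of_mem hgNM] at h2
  have h3 := Finset.card_pos.mpr ⟨g, hgNM⟩
  omega

/-- Key covering lemma (vertical direction). -/
lemma cover_v {P M N : Finset Cell} (hM : NonAtt P M) (hN : NonAtt P N)
    (hNcard : N.card = M.card + 1)
    (hmin : ∀ N' : Finset Cell, NonAtt P N' → N'.card = M.card + 1 →
      (N \ M).card ≤ (N' \ M).card)
    {c : Cell} (hc : c ∈ M) : ∃ d ∈ N, Rv P c d := by
  by_contra hno
  push_neg at hno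
  have hcP : c ∈ P := hM.1 hc
  have hcN : c ∉ N := fun h => hno c h (Rv_refl hcP)
  obtain ⟨g, hgN, hgM, hsafe⟩ :
      ∃ g, g ∈ N ∧ g ∉ M ∧ ∀ b ∈ N.erase g, ¬ Attacks P c b := by
    by_cases hg : ∃ g ∈ N, Rh P c g
    · obtain ⟨g, hgN, hgv⟩ := hg
      have hgc : g ≠ c := fun h => hcN (h ▸ hgN)
      have hgM : g ∉ M := fun hgM' =>
        hM.2 c hc g hgM' (attacks_iff.mpr ⟨fun h => hgc h.symm, Or.inl hgv⟩)
      refine ⟨g, hgN, hgM, fun b hb hatt => ?_⟩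
      have hbN := Finset.mem_erase.mp hb
      rcases (attacks_iff.mp hatt).2 with hh | hv
      · exact hN.2 b hbN.2 g hgN
          (attacks_iff.mpr ⟨hbN.1, Or.inl (Rh_trans (Rh_symm hh) hgv)⟩)
      · exact hno b hbN.2 hv
    · push_neg at hg
      have hne : (N \ M).Nonempty := by
        rw [Finset.sdiff_nonempty]
        intro hsub
        have := Finset.card_le_card hsub
        omega
      obtain ⟨g, hg'⟩ := hne
      rw [Finset.mem_sdiff] at hg'
      refine ⟨g, hg'.1, hg'.2, fun b hb hatt => ?_⟩
      have hbN := Finset.mem_erase.mp hb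
      rcases (attacks_iff.mp hatt).2 with hh | hv
      · exact hg b hbN.2 hh
      · exact hno b hbN.2 hv
  have hcNe : c ∉ N.erase g := fun h => hcN (Finset.mem_erase.mp h).2
  have hN'att : NonAtt P (insert c (N.erase g)) := by
    refine ⟨fun x hx => ?_, fun a ha b hb hatt => ?_⟩
    · rcases Finset.mem_insert.mp hx with h | h
      · exact h ▸ hcP
      · exact hN.1 (Finset.mem_erase.mp h).2
    · rcases Finset.mem_insert.mp ha with ha' | ha' <;>
        rcases Finset.mem_insert.mp hb with hb' | hb'
      · exact (attacks_iff.mp hatt).1 (ha'.trans hb'.symm)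
      · exact hsafe b hb' (by rwa [ha'] at hatt)
      · exact hsafe a ha' (attacks_symm (by rwa [hb'] at hatt))
      · exact hN.2 a (Finset.mem_erase.mp ha').2 b (Finset.mem_erase.mp hb').2 hatt
  have hN'card : (insert c (N.erase g)).card = M.card + 1 := by
    rw [Finset.card_insert_of_notMem hcNe, Finset.card_erase_of_mem hgN]
    have := Finset.card_pos.mpr ⟨g, hgN⟩
    omega
  have hgNM : g ∈ N \ M := Finset.mem_sdiff.mpr ⟨hgN, hgM⟩
  have hsub : insert c (N.erase g) \ M ⊆ (N \ M).erase g := by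
    intro x hx
    rw [Finset.mem_sdiff] at hx
    rcases Finset.mem_insert.mp hx.1 with h | h
    · exact absurd (h ▸ hc) hx.2
    · rw [Finset.mem_erase] at h ⊢
      exact ⟨h.1, Finset.mem_sdiff.mpr ⟨h.2, hx.2⟩⟩
  have h1 := hmin _ hN'att hN'card
  have h2 := Finset.card_le_card hsub
  rw [Finset.card_erase_of_mem hgNM] at h2
  have h3 := Finset.card_pos.mpr ⟨g, hgNM⟩
  omega

/-- If `F` is a facet of the rook complex of a polyomino `P` with
`|F| < r(P)`, then there is a facet `F'` with `|F'| = |F| + 1`. -/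
theorem statement0 (P F : Finset Cell) (hP : IsPolyomino P)
    (hF : IsFacet P F) (hcard : F.card < rookNumber P) :
    ∃ F' : Finset Cell, IsFacet P F' ∧ F'.card = F.card + 1 := by
  obtain ⟨hMnon, hMmax⟩ := hF
  -- a non-attacking set of maximal cardinality exists
  have hne : {n : ℕ | ∃ G : Finset Cell, NonAtt P G ∧ G.card = n}.Nonempty :=
    ⟨0, ∅, ⟨Finset.empty_subset P, by simp⟩, rfl⟩
  have hbdd : BddAbove {n : ℕ | ∃ G : Finset Cell, NonAtt P G ∧ G.card = n} := by
    refine ⟨P.card, fun n hn => ?_⟩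
    obtain ⟨G, hG, rfl⟩ := hn
    exact Finset.card_le_card hG.1
  have hmem : rookNumber P ∈ {n : ℕ | ∃ G : Finset Cell, NonAtt P G ∧ G.card = n} := by
    rw [rookNumber]
    exact Nat.sSup_mem hne hbdd
  obtain ⟨G, hG, hGcard⟩ := hmem
  have hGc : F.card + 1 ≤ G.card := by rw [hGcard]; omega
  obtain ⟨N₀, hN₀G, hN₀card⟩ := Finset.exists_subset_card_eq hGc
  have hN₀ : NonAtt P N₀ :=
    ⟨hN₀G.trans hG.1, fun a ha b hb => hG.2 a (hN₀G ha) b (hN₀G hb)⟩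
  -- choose a non-attacking set of cardinality |F|+1 minimizing |N \ F|
  have hTne : {k : ℕ | ∃ N : Finset Cell, NonAtt P N ∧ N.card = F.card + 1 ∧
      (N \ F).card = k}.Nonempty := ⟨(N₀ \ F).card, N₀, hN₀, hN₀card, rfl⟩
  obtain ⟨N, hN, hNcard, hNk⟩ := Nat.sInf_mem hTne
  have hmin : ∀ N' : Finset Cell, NonAtt P N' → N'.card = F.card + 1 →
      (N \ F).card ≤ (N' \ F).card := by
    intro N' h1 h2
    rw [hNk]
    exact Nat.sInf_le ⟨N', h1, h2, rfl⟩
  refine ⟨N, ⟨hN, ?_⟩, hNcard⟩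
  intro G' hG' hNG'
  refine Finset.Subset.antisymm ?_ hNG'
  intro x hx
  by_contra hxN
  have hxP : x ∈ P := hG'.1 hx
  have key : ∃ d ∈ N, Attacks P x d := by
    by_cases hxF : x ∈ F
    · obtain ⟨d, hdN, hd⟩ := cover_h hMnon hN hNcard hmin hxF
      exact ⟨d, hdN, attacks_iff.mpr ⟨fun h => hxN (h ▸ hdN), Or.inl hd⟩⟩
    · have hins : insert x F ≠ F := by
        intro h
        exact hxF (h ▸ Finset.mem_insert_self x F)
      have hnot : ¬ NonAtt P (insert x F) := fun h =>
        hins (hMmax _ h (Finset.subset_insert x F))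
      have hpair : ¬ (∀ c ∈ insert x F, ∀ d ∈ insert x F, ¬ Attacks P c d) := by
        intro hp
        exact hnot ⟨Finset.insert_subset hxP hMnon.1, hp⟩
      push_neg at hpair
      obtain ⟨a, ha, b, hb, hab⟩ := hpair
      have hxm : ∃ m ∈ F, Attacks P x m := by
        rcases Finset.mem_insert.mp ha with ha' | ha' <;>
          rcases Finset.mem_insert.mp hb with hb' | hb'
        · exact absurd (ha'.trans hb'.symm) (attacks_iff.mp hab).1
        · exact ⟨b, hb', by rwa [ha'] at hab⟩
        · exact ⟨a, ha', attacks_symm (by rwa [hb'] at hab)⟩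
        · exact (hMnon.2 a ha' b hb' hab).elim
      obtain ⟨m, hmF, hxmatt⟩ := hxm
      rcases (attacks_iff.mp hxmatt).2 with hh | hv
      · obtain ⟨d, hdN, hd⟩ := cover_h hMnon hN hNcard hmin hmF
        exact ⟨d, hdN, attacks_iff.mpr ⟨fun h => hxN (h ▸ hdN), Or.inl (Rh_trans hh hd)⟩⟩
      · obtain ⟨d, hdN, hd⟩ := cover_v hMnon hN hNcard hmin hmF
        exact ⟨d, hdN, attacks_iff.mpr ⟨fun h => hxN (h ▸ hdN), Or.inr (Rv_trans hv hd)⟩⟩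
  obtain ⟨d, hdN, hatt⟩ := key
  exact hG'.2 x hx d (hNG' hdN) hatt
end

section
/- Let P be a simple thin polyomino having exactly one non-attacking set of cells of maximum cardinality r(P); call it F. Then every maximal cell interval of P contains at most one single cell of P, and every single cell of P belongs to F. -/
open MvPolynomial


/-- If a simple thin polyomino `P` has exactly one non-attacking set
`F` of cells of maximum cardinality `r(P)`, then every maximal cell interval of `P`
contains at most one single cell, and every single cell belongs to `F`. -/
theorem statement1 (P : Finset Cell) (hsimple : IsSimplePoly P) (hthin : IsThin P)
    (F : Finset Cell) (hF : NonAtt P F) (hFcard : F.card = rookNumber P)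
    (huniq : ∀ G : Finset Cell, NonAtt P G → G.card = rookNumber P → G = F) :
    (∀ I : Finset Cell, IsMaxInterval P I →
      ∀ c d : Cell, IsSingle P c → IsSingle P d → c ∈ I → d ∈ I → c = d) ∧
    (∀ c : Cell, IsSingle P c → c ∈ F) := by
  have hsymm : ∀ {c d : Cell}, Attacks P c d → Attacks P d c := by
    rintro c d ⟨hne, h⟩
    refine ⟨hne.symm, ?_⟩
    rcases h with ⟨h1, h2⟩ | ⟨h1, h2⟩
    · left
      refine ⟨h1.symm, fun t ht1 ht2 => ?_⟩
      have := h2 t (by rwa [min_comm]) (by rwa [max_comm])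
      rwa [h1] at this
    · right
      refine ⟨h1.symm, fun t ht1 ht2 => ?_⟩
      have := h2 t (by rwa [min_comm]) (by rwa [max_comm])
      rwa [h1] at this
  have hbdd : BddAbove {n : ℕ | ∃ G : Finset Cell, NonAtt P G ∧ G.card = n} := by
    refine ⟨P.card, fun n hn => ?_⟩
    obtain ⟨G, hG, rfl⟩ := hn
    exact Finset.card_le_card hG.1
  have key : ∀ c : Cell, IsSingle P c → c ∈ F := by
    intro c hc
    by_contra hcF
    obtain ⟨hcP, I, hI, hcI, hattI⟩ := hc
    by_cases hex : ∃ e ∈ F, Attacks P c e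
    · obtain ⟨d, hdF, hcd⟩ := hex
      have hdI : d ∈ I := hattI d (hF.1 hdF) hcd
      have hcne : c ∉ F.erase d := fun h => hcF (Finset.mem_of_mem_erase h)
      have honly : ∀ e ∈ F, Attacks P c e → e = d := by
        intro e heF hce
        by_contra hne
        have heI : e ∈ I := hattI e (hF.1 heF) hce
        exact hF.2 e heF d hdF (hI.2.2.1 e heI d hdI hne)
      have hGnon : NonAtt P (insert c (F.erase d)) := by
        constructor
        · intro x hx
          rcases Finset.mem_insert.mp hx with rfl | hx
          · exact hcP
          · exact hF.1 (Finset.mem_of_mem_erase hx)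
        · intro x hx y hy hxy
          rcases Finset.mem_insert.mp hx with hx1 | hx1
          · subst hx1
            rcases Finset.mem_insert.mp hy with hy1 | hy1
            · subst hy1; exact hxy.1 rfl
            · exact (Finset.ne_of_mem_erase hy1)
                (honly y (Finset.mem_of_mem_erase hy1) hxy)
          · rcases Finset.mem_insert.mp hy with hy1 | hy1
            · subst hy1
              exact (Finset.ne_of_mem_erase hx1)
                (honly x (Finset.mem_of_mem_erase hx1) (hsymm hxy))
            · exact hF.2 x (Finset.mem_of_mem_erase hx1) y (Finset.mem_of_mem_erase hy1) hxy
      have hGcard : (insert c (F.erase d)).card = F.card := by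
        rw [Finset.card_insert_of_notMem hcne, Finset.card_erase_of_mem hdF]
        have : 1 ≤ F.card := Finset.card_pos.mpr ⟨d, hdF⟩
        omega
      have hGF := huniq _ hGnon (by rw [hGcard, hFcard])
      exact hcF (hGF ▸ Finset.mem_insert_self c (F.erase d))
    · push_neg at hex
      have hGnon : NonAtt P (insert c F) := by
        constructor
        · intro x hx
          rcases Finset.mem_insert.mp hx with rfl | hx
          · exact hcP
          · exact hF.1 hx
        · intro x hx y hy hxy
          rcases Finset.mem_insert.mp hx with hx1 | hx1
          · subst hx1
            rcases Finset.mem_insert.mp hy with hy1 | hy1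
            · subst hy1; exact hxy.1 rfl
            · exact hex y hy1 hxy
          · rcases Finset.mem_insert.mp hy with hy1 | hy1
            · subst hy1; exact hex x hx1 (hsymm hxy)
            · exact hF.2 x hx1 y hy1 hxy
      have hle : F.card + 1 ≤ rookNumber P :=
        le_csSup hbdd ⟨insert c F, hGnon, by rw [Finset.card_insert_of_notMem hcF]⟩
      rw [← hFcard] at hle
      omega
  refine ⟨?_, key⟩
  intro I hI c d hc hd hcI hdI
  by_contra hne
  exact hF.2 c (key c hc) d (key d hd) (hI.2.2.1 c hcI d hdI hne)
end
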